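/- arXiv:1605.01041 — 5 statements merged into one kernel-verified Lean document; each statement's English description precedes it below -/
import Mathlib

section
/- Suppose T_n converges to T in generalised strong resolvent sense. Then for every λ in the ε-approximate point spectrum of T and every unit vector x ∈ dom(T) with ‖(T−λ)x‖ < ε, there exist n_λ ∈ ℕ and unit vectors x_n ∈ dom(T_n), n ≥ n_λ, with ‖(T_n − λ)x_n‖ < ε and ‖x_n − x‖ → 0; in particular λ ∈ σ_{app,ε}(T_n) for all n ≥ n_λ. -/
/-!
With `y := (T - λ₀) x`, the vectors `uₙ := (Tₙ - λ₀)⁻¹ y = (Tₙ - λ₀)⁻¹ Pₙ y` lie in `dom Tₙ` and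
converge to `(T - λ₀)⁻¹ y = x`, while `(Tₙ - λ) uₙ = Pₙ y + (λ₀ - λ) uₙ` converges to
`P y + (λ₀ - λ) x = (T - λ) x`. The unit vectors `uₙ / ‖uₙ‖` have the same two limits, so
`‖(Tₙ - λ) xₙ‖ < ε` for all large `n`.
-/

open Filter Topology

noncomputable section

variable {H₀ : Type} [NormedAddCommGroup H₀] [InnerProductSpace ℂ H₀] [CompleteSpace H₀]

/-- Weak convergence `x n ⇀ x₀` in the Hilbert space `H₀`. -/
def WeakTendsto (x : ℕ → H₀) (x₀ : H₀) : Prop :=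
  ∀ y : H₀, Tendsto (fun n => (inner ℂ (x n - x₀) y : ℂ)) atTop (nhds 0)

/-- `P` is the orthogonal projection of `H₀` onto the subspace `Hsp`. -/
def IsOrthProj (Hsp : Submodule ℂ H₀) (P : H₀ →L[ℂ] H₀) : Prop :=
  ∀ x : H₀, P x ∈ Hsp ∧ x - P x ∈ Hspᗮ

/-- The operator `T` with domain `dom` is densely defined in the subspace `Hsp` and maps its
domain into `Hsp`. -/
def ActsIn (Hsp dom : Submodule ℂ H₀) (T : H₀ →ₗ[ℂ] H₀) : Prop :=
  dom ≤ Hsp ∧ dom.topologicalClosure = Hsp ∧ ∀ x ∈ dom, T x ∈ Hsp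

/-- The operator `T` with domain `dom` is closed. -/
def IsClosedOp (dom : Submodule ℂ H₀) (T : H₀ →ₗ[ℂ] H₀) : Prop :=
  ∀ (x : ℕ → H₀) (u v : H₀), (∀ k, x k ∈ dom) →
    Tendsto x atTop (nhds u) → Tendsto (fun k => T (x k)) atTop (nhds v) →
    u ∈ dom ∧ T u = v

/-- `R` is the resolvent `(T - lam)⁻¹` of the operator `T` acting in `Hsp` with domain `dom`,
extended by `0` on the orthogonal complement of `Hsp`. -/
def InResolvent (Hsp dom : Submodule ℂ H₀) (T : H₀ →ₗ[ℂ] H₀) (lam : ℂ)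
    (R : H₀ →L[ℂ] H₀) : Prop :=
  (∀ y ∈ Hsp, R y ∈ dom ∧ T (R y) - lam • R y = y) ∧
  (∀ x ∈ dom, R (T x - lam • x) = x) ∧
  ∀ y ∈ Hspᗮ, R y = 0

/-- `lam` belongs to the resolvent set `ρ(T)`. -/
def InResolventSet (Hsp dom : Submodule ℂ H₀) (T : H₀ →ₗ[ℂ] H₀) (lam : ℂ) : Prop :=
  ∃ R : H₀ →L[ℂ] H₀, InResolvent Hsp dom T lam R

/-- `lam` belongs to the limiting essential spectrum of the sequence `(Tₙ)`. -/
def LimEssSpectrum (domn : ℕ → Submodule ℂ H₀) (Tn : ℕ → H₀ →ₗ[ℂ] H₀) (lam : ℂ) : Prop :=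
  ∃ (φ : ℕ → ℕ) (x : ℕ → H₀), StrictMono φ ∧ (∀ k, x k ∈ domn (φ k)) ∧
    (∀ k, ‖x k‖ = 1) ∧ WeakTendsto x 0 ∧
    Tendsto (fun k => ‖Tn (φ k) (x k) - lam • x k‖) atTop (nhds 0)

/-- `lam` belongs to the limiting essential `eps`-near spectrum of the sequence `(Tₙ)`. -/
def LimEssNear (domn : ℕ → Submodule ℂ H₀) (Tn : ℕ → H₀ →ₗ[ℂ] H₀) (eps : ℝ) (lam : ℂ) :
    Prop :=
  ∃ (φ : ℕ → ℕ) (x : ℕ → H₀), StrictMono φ ∧ (∀ k, x k ∈ domn (φ k)) ∧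
    (∀ k, ‖x k‖ = 1) ∧ WeakTendsto x 0 ∧
    Tendsto (fun k => ‖Tn (φ k) (x k) - lam • x k‖) atTop (nhds eps)

/-- `lam` belongs to the limiting approximate point spectrum of the sequence `(Tₙ)`. -/
def LimApproxSpectrum (domn : ℕ → Submodule ℂ H₀) (Tn : ℕ → H₀ →ₗ[ℂ] H₀) (lam : ℂ) : Prop :=
  ∃ (φ : ℕ → ℕ) (x : ℕ → H₀), StrictMono φ ∧ (∀ k, x k ∈ domn (φ k)) ∧
    (∀ k, ‖x k‖ = 1) ∧
    Tendsto (fun k => ‖Tn (φ k) (x k) - lam • x k‖) atTop (nhds 0)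

/-- `lam` belongs to the essential spectrum of `T`. -/
def EssSpectrum (dom : Submodule ℂ H₀) (T : H₀ →ₗ[ℂ] H₀) (lam : ℂ) : Prop :=
  ∃ x : ℕ → H₀, (∀ k, x k ∈ dom) ∧ (∀ k, ‖x k‖ = 1) ∧ WeakTendsto x 0 ∧
    Tendsto (fun k => ‖T (x k) - lam • x k‖) atTop (nhds 0)

/-- `lam` belongs to the essential `eps`-near spectrum of `T`. -/
def EssNear (dom : Submodule ℂ H₀) (T : H₀ →ₗ[ℂ] H₀) (eps : ℝ) (lam : ℂ) : Prop :=
  ∃ x : ℕ → H₀, (∀ k, x k ∈ dom) ∧ (∀ k, ‖x k‖ = 1) ∧ WeakTendsto x 0 ∧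
    Tendsto (fun k => ‖T (x k) - lam • x k‖) atTop (nhds eps)

/-- `lam` belongs to the approximate point spectrum of `T`. -/
def ApproxSpectrum (dom : Submodule ℂ H₀) (T : H₀ →ₗ[ℂ] H₀) (lam : ℂ) : Prop :=
  ∃ x : ℕ → H₀, (∀ k, x k ∈ dom) ∧ (∀ k, ‖x k‖ = 1) ∧
    Tendsto (fun k => ‖T (x k) - lam • x k‖) atTop (nhds 0)

/-- `lam` belongs to the point spectrum of `T`. -/
def PointSpectrum (dom : Submodule ℂ H₀) (T : H₀ →ₗ[ℂ] H₀) (lam : ℂ) : Prop :=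
  ∃ x ∈ dom, x ≠ 0 ∧ T x = lam • x

/-- `lam` belongs to the `eps`-approximate point spectrum of `T`. -/
def PseudoAppSpectrum (dom : Submodule ℂ H₀) (T : H₀ →ₗ[ℂ] H₀) (eps : ℝ) (lam : ℂ) : Prop :=
  ∃ x ∈ dom, ‖x‖ = 1 ∧ ‖T x - lam • x‖ < eps

/-- `lam` belongs to the spectrum of `T` acting in `Hsp`. -/
def InSpec (Hsp dom : Submodule ℂ H₀) (T : H₀ →ₗ[ℂ] H₀) (lam : ℂ) : Prop :=
  ¬ InResolventSet Hsp dom T lam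

/-- `lam` belongs to the `eps`-pseudospectrum of `T` acting in `Hsp`
(with the convention `‖(T-lam)⁻¹‖ = ∞` on the spectrum). -/
def InPseudoSpec (Hsp dom : Submodule ℂ H₀) (T : H₀ →ₗ[ℂ] H₀) (eps : ℝ) (lam : ℂ) : Prop :=
  (¬ InResolventSet Hsp dom T lam) ∨
    ∃ R : H₀ →L[ℂ] H₀, InResolvent Hsp dom T lam R ∧ 1 / eps < ‖R‖

/-- Generalised strong resolvent convergence `Tₙ → T`. -/
def GSRConv (Hsp dom : Submodule ℂ H₀) (T : H₀ →ₗ[ℂ] H₀)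
    (Hn domn : ℕ → Submodule ℂ H₀) (Tn : ℕ → H₀ →ₗ[ℂ] H₀) : Prop :=
  ∃ (n₀ : ℕ) (lam₀ : ℂ) (R : H₀ →L[ℂ] H₀) (Rn : ℕ → H₀ →L[ℂ] H₀),
    InResolvent Hsp dom T lam₀ R ∧
    (∀ n, n ≥ n₀ → InResolvent (Hn n) (domn n) (Tn n) lam₀ (Rn n)) ∧
    ∀ y : H₀, Tendsto (fun n => Rn n y) atTop (nhds (R y))

/-- Generalised norm resolvent convergence `Tₙ → T`. -/
def GNRConv (Hsp dom : Submodule ℂ H₀) (T : H₀ →ₗ[ℂ] H₀)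
    (Hn domn : ℕ → Submodule ℂ H₀) (Tn : ℕ → H₀ →ₗ[ℂ] H₀) : Prop :=
  ∃ (n₀ : ℕ) (lam₀ : ℂ) (R : H₀ →L[ℂ] H₀) (Rn : ℕ → H₀ →L[ℂ] H₀),
    InResolvent Hsp dom T lam₀ R ∧
    (∀ n, n ≥ n₀ → InResolvent (Hn n) (domn n) (Tn n) lam₀ (Rn n)) ∧
    Tendsto (fun n => ‖Rn n - R‖) atTop (nhds 0)

/-- The sequence of bounded operators `(Bₙ)`, `Bₙ ∈ L(Hₙ)`, is discretely compact: images of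
bounded sequences `xₙ ∈ Hₙ` have subsequences converging in norm to an element of `Hsp`. -/
def DiscretelyCompact (Hsp : Submodule ℂ H₀) (Hn : ℕ → Submodule ℂ H₀)
    (B : ℕ → H₀ →L[ℂ] H₀) : Prop :=
  ∀ (φ : ℕ → ℕ) (x : ℕ → H₀), StrictMono φ → (∀ k, x k ∈ Hn (φ k)) →
    (∃ C : ℝ, ∀ k, ‖x k‖ ≤ C) →
    ∃ (ψ : ℕ → ℕ) (z : H₀), StrictMono ψ ∧ z ∈ Hsp ∧
      Tendsto (fun k => B (φ (ψ k)) (x (ψ k))) atTop (nhds z)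

/-- `S` with domain `domS` is the Hilbert-space adjoint of the densely defined operator `T`
acting in `Hsp` with domain `dom`. -/
def IsAdjointOp (Hsp dom : Submodule ℂ H₀) (T : H₀ →ₗ[ℂ] H₀)
    (domS : Submodule ℂ H₀) (S : H₀ →ₗ[ℂ] H₀) : Prop :=
  domS ≤ Hsp ∧ ∀ y ∈ Hsp, ∀ z ∈ Hsp,
    ((y ∈ domS ∧ S y = z) ↔ ∀ x ∈ dom, (inner ℂ (T x) y : ℂ) = inner ℂ x z)

/-- The sequence of bounded operators `(Aₙ)` converges strongly. -/
def StrongConvSeq (A : ℕ → H₀ →L[ℂ] H₀) : Prop :=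
  ∃ A₀ : H₀ →L[ℂ] H₀, ∀ y : H₀, Tendsto (fun n => A n y) atTop (nhds (A₀ y))

/-- `lam` belongs to the region of boundedness `Δ_b((Tₙ))`. -/
def InRegionOfBoundedness (Hn domn : ℕ → Submodule ℂ H₀) (Tn : ℕ → H₀ →ₗ[ℂ] H₀)
    (lam : ℂ) : Prop :=
  ∃ (n₀ : ℕ) (C : ℝ) (Rn : ℕ → H₀ →L[ℂ] H₀),
    ∀ n, n ≥ n₀ → InResolvent (Hn n) (domn n) (Tn n) lam (Rn n) ∧ ‖Rn n‖ ≤ C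


section Normalize

variable {E : Type*} [NormedAddCommGroup E] [NormedSpace ℂ E]

theorem exists_unit_approx_of_tendsto {dom : ℕ → Submodule ℂ E} {Tn : ℕ → E →ₗ[ℂ] E}
    {u : ℕ → E} {x y : E} {lam : ℂ} {eps : ℝ} (hdom : ∀ᶠ n in atTop, u n ∈ dom n)
    (hu : Tendsto u atTop (𝓝 x)) (hx : ‖x‖ = 1)
    (hTu : Tendsto (fun n => Tn n (u n) - lam • u n) atTop (𝓝 y)) (hy : ‖y‖ < eps) :
    ∃ xn : ℕ → E,
      (∀ᶠ n in atTop, xn n ∈ dom n ∧ ‖xn n‖ = 1 ∧ ‖Tn n (xn n) - lam • xn n‖ < eps) ∧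
      Tendsto xn atTop (𝓝 x) := by
  set c : ℕ → ℂ := fun n => ((‖u n‖ : ℝ) : ℂ)⁻¹
  have hc : Tendsto c atTop (𝓝 1) := by
    have h : Tendsto (fun n => ((‖u n‖ : ℝ) : ℂ)) atTop (𝓝 1) := by
      simpa [hx, Function.comp_def] using (Complex.continuous_ofReal.tendsto ‖x‖).comp hu.norm
    simpa using h.inv₀ one_ne_zero
  have hTc : ∀ n, Tn n (c n • u n) - lam • c n • u n = c n • (Tn n (u n) - lam • u n) := by
    intro n
    rw [map_smul, smul_sub, smul_comm lam]
  have hu0 : ∀ᶠ n in atTop, u n ≠ 0 :=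
    hu.eventually_ne (norm_ne_zero_iff.mp (hx ▸ one_ne_zero))
  have hsmall : ∀ᶠ n in atTop, ‖c n • (Tn n (u n) - lam • u n)‖ < eps := by
    have h := (hc.smul hTu).norm
    rw [one_smul] at h
    exact h.eventually (eventually_lt_nhds hy)
  refine ⟨fun n => c n • u n, ?_, by simpa using hc.smul hu⟩
  filter_upwards [hdom, hu0, hsmall] with n hdom hu0 hsmall
  exact ⟨(dom n).smul_mem _ hdom, norm_smul_inv_norm hu0, (hTc n).symm ▸ hsmall⟩

end Normalize

section Resolvent

variable {E : Type} [NormedAddCommGroup E] [InnerProductSpace ℂ E]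
  {Hsp dom : Submodule ℂ E} {T : E →ₗ[ℂ] E} {lam : ℂ} {R P : E →L[ℂ] E}

namespace InResolvent

theorem apply_proj (hR : InResolvent Hsp dom T lam R) (hP : IsOrthProj Hsp P) (y : E) :
    R (P y) = R y := by
  have h : R (y - P y) = 0 := hR.2.2 _ (hP y).2
  rw [map_sub, sub_eq_zero] at h
  exact h.symm

theorem apply_mem (hR : InResolvent Hsp dom T lam R) (hP : IsOrthProj Hsp P) (y : E) :
    R y ∈ dom :=
  hR.apply_proj hP y ▸ (hR.1 _ (hP y).1).1

theorem sub_smul_apply (hR : InResolvent Hsp dom T lam R) (hP : IsOrthProj Hsp P) (y : E) :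
    T (R y) - lam • R y = P y :=
  hR.apply_proj hP y ▸ (hR.1 _ (hP y).1).2

theorem proj_sub_smul (hR : InResolvent Hsp dom T lam R) (hP : IsOrthProj Hsp P) {x : E}
    (hx : x ∈ dom) : P (T x - lam • x) = T x - lam • x := by
  simpa [hR.2.1 x hx] using (hR.sub_smul_apply hP (T x - lam • x)).symm

end InResolvent

theorem GSRConv.exists_tendsto_graph {Hn domn : ℕ → Submodule ℂ E} {Tn : ℕ → E →ₗ[ℂ] E}
    {Pn : ℕ → E →L[ℂ] E} (hconv : GSRConv Hsp dom T Hn domn Tn) (hP : IsOrthProj Hsp P)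
    (hPn : ∀ n, IsOrthProj (Hn n) (Pn n))
    (hPconv : ∀ y : E, Tendsto (fun n => Pn n y) atTop (𝓝 (P y))) {x : E} (hx : x ∈ dom)
    (lam : ℂ) :
    ∃ u : ℕ → E, (∀ᶠ n in atTop, u n ∈ domn n) ∧ Tendsto u atTop (𝓝 x) ∧
      Tendsto (fun n => Tn n (u n) - lam • u n) atTop (𝓝 (T x - lam • x)) := by
  obtain ⟨n₀, lam₀, R, Rn, hR, hRn, hRconv⟩ := hconv
  set y := T x - lam₀ • x
  have hu : Tendsto (fun n => Rn n y) atTop (𝓝 x) := hR.2.1 x hx ▸ hRconv y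
  refine ⟨fun n => Rn n y, ?_, hu, ?_⟩
  · filter_upwards [eventually_ge_atTop n₀] with n hn using (hRn n hn).apply_mem (hPn n) y
  · -- `(Tₙ - λ) uₙ = Pₙ y + (λ₀ - λ) uₙ → P y + (λ₀ - λ) x = (T - λ) x`
    have hlim : Tendsto (fun n => Pn n y + (lam₀ - lam) • Rn n y) atTop
        (𝓝 (T x - lam • x)) := by
      convert (hPconv y).add (hu.const_smul (lam₀ - lam)) using 2
      rw [hR.proj_sub_smul hP hx]
      module
    refine hlim.congr' ?_
    filter_upwards [eventually_ge_atTop n₀] with n hn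
    rw [← (hRn n hn).sub_smul_apply (hPn n) y]
    module

end Resolvent

theorem stmt13_general
    (Hsp dom : Submodule ℂ H₀) (T : H₀ →ₗ[ℂ] H₀)
    (Hn domn : ℕ → Submodule ℂ H₀) (Tn : ℕ → H₀ →ₗ[ℂ] H₀)
    (P : H₀ →L[ℂ] H₀) (Pn : ℕ → H₀ →L[ℂ] H₀)
    (hP : IsOrthProj Hsp P) (hPn : ∀ n, IsOrthProj (Hn n) (Pn n))
    (hPconv : ∀ y : H₀, Tendsto (fun n => Pn n y) atTop (nhds (P y)))
    (hconv : GSRConv Hsp dom T Hn domn Tn)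
    (eps : ℝ) (lam : ℂ) (x : H₀)
    (hx : x ∈ dom) (hx1 : ‖x‖ = 1) (hxeps : ‖T x - lam • x‖ < eps) :
    ∃ (nlam : ℕ) (xn : ℕ → H₀),
      (∀ n, n ≥ nlam → xn n ∈ domn n ∧ ‖xn n‖ = 1 ∧ ‖Tn n (xn n) - lam • xn n‖ < eps) ∧
      Tendsto (fun n => ‖xn n - x‖) atTop (nhds 0) ∧
      ∀ n, n ≥ nlam → PseudoAppSpectrum (domn n) (Tn n) eps lam := by
  obtain ⟨u, hudom, hu, hTu⟩ := hconv.exists_tendsto_graph hP hPn hPconv hx lam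
  obtain ⟨xn, hxn, hxn_tendsto⟩ := exists_unit_approx_of_tendsto hudom hu hx1 hTu hxeps
  obtain ⟨nlam, hnlam⟩ := eventually_atTop.mp hxn
  refine ⟨nlam, xn, hnlam, tendsto_iff_norm_sub_tendsto_zero.mp hxn_tendsto, ?_⟩
  intro n hn
  obtain ⟨hdom, hnorm, hlt⟩ := hnlam n hn
  exact ⟨xn n, hdom, hnorm, hlt⟩

theorem stmt13 [TopologicalSpace.SeparableSpace H₀]
    (Hsp dom : Submodule ℂ H₀) (T : H₀ →ₗ[ℂ] H₀)
    (hHcl : IsClosed ((Hsp : Set H₀)))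
    (hT : ActsIn Hsp dom T) (hTcl : IsClosedOp dom T)
    (Hn domn : ℕ → Submodule ℂ H₀) (Tn : ℕ → H₀ →ₗ[ℂ] H₀)
    (hHncl : ∀ n, IsClosed ((Hn n : Set H₀)))
    (hTn : ∀ n, ActsIn (Hn n) (domn n) (Tn n))
    (hTncl : ∀ n, IsClosedOp (domn n) (Tn n))
    (P : H₀ →L[ℂ] H₀) (Pn : ℕ → H₀ →L[ℂ] H₀)
    (hP : IsOrthProj Hsp P) (hPn : ∀ n, IsOrthProj (Hn n) (Pn n))
    (hPconv : ∀ y : H₀, Tendsto (fun n => Pn n y) atTop (nhds (P y)))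
    (hconv : GSRConv Hsp dom T Hn domn Tn)
    (eps : ℝ) (heps : 0 < eps) (lam : ℂ) (x : H₀)
    (hx : x ∈ dom) (hx1 : ‖x‖ = 1) (hxeps : ‖T x - lam • x‖ < eps) :
    ∃ (nlam : ℕ) (xn : ℕ → H₀),
      (∀ n, n ≥ nlam → xn n ∈ domn n ∧ ‖xn n‖ = 1 ∧ ‖Tn n (xn n) - lam • xn n‖ < eps) ∧
      Tendsto (fun n => ‖xn n - x‖) atTop (nhds 0) ∧
      ∀ n, n ≥ nlam → PseudoAppSpectrum (domn n) (Tn n) eps lam :=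
  stmt13_general Hsp dom T Hn domn Tn P Pn hP hPn hPconv hconv eps lam x hx hx1 hxeps

end
end

section
/- Assume T_n* converges to T* in generalised strong resolvent sense. If x_n ∈ dom(T_n), n ∈ I ⊂ ℕ infinite, satisfy ‖x_n‖ = 1, x_n → 0 weakly, and (‖T_n x_n‖)_{n ∈ I} is bounded, then T_n x_n → 0 weakly. -/
open Filter Topology

noncomputable section

variable {H₀ : Type} [NormedAddCommGroup H₀] [InnerProductSpace ℂ H₀] [CompleteSpace H₀]

/-!
For every `t`, `w = Rₙ t` solves `(Sₙ - λ₀) w = Pₙ t`, so the adjoint relation gives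
`⟪Tₙ xₙ, Rₙ t⟫ = ⟪xₙ, Pₙ t⟫ + λ₀ ⟪xₙ, Rₙ t⟫ → 0`, as `xₙ ⇀ 0` and `Pₙ t`, `Rₙ t` converge in
norm. Since `(Tₙ xₙ)` is bounded, `Rₙ t` may be replaced by its limit `R t`, and the range of `R`
is `dom S`, which is dense in `H` because `T` is closed. Boundedness again extends
`⟪Tₙ xₙ, v⟫ → 0` from `dom S` to all `v ∈ H`, and finally `⟪Tₙ xₙ, y⟫ = ⟪Tₙ xₙ, Pₙ y⟫` with
`Pₙ y → P y ∈ H`.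
-/

section InnerLimits

variable {𝕜 E ι : Type*} [RCLike 𝕜] [NormedAddCommGroup E] [InnerProductSpace 𝕜 E]
  {l : Filter ι} {a b : ι → E} {b₀ : E} {C : ℝ}

theorem tendsto_inner_sub_inner_of_norm_le (hC : ∀ i, ‖a i‖ ≤ C) (hb : Tendsto b l (𝓝 b₀)) :
    Tendsto (fun i => inner 𝕜 (a i) (b i) - inner 𝕜 (a i) b₀) l (𝓝 0) := by
  have hsmall : Tendsto (fun i => C * ‖b i - b₀‖) l (𝓝 0) := by
    simpa using (tendsto_iff_norm_sub_tendsto_zero.mp hb).const_mul C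
  refine squeeze_zero_norm (fun i => ?_) hsmall
  rw [← inner_sub_right]
  exact (norm_inner_le_norm _ _).trans (mul_le_mul_of_nonneg_right (hC i) (norm_nonneg _))

theorem tendsto_inner_iff_of_norm_le (hC : ∀ i, ‖a i‖ ≤ C) (hb : Tendsto b l (𝓝 b₀)) {c : 𝕜} :
    Tendsto (fun i => inner 𝕜 (a i) (b i)) l (𝓝 c) ↔
      Tendsto (fun i => inner 𝕜 (a i) b₀) l (𝓝 c) := by
  have h := tendsto_inner_sub_inner_of_norm_le (𝕜 := 𝕜) hC hb
  exact ⟨fun h' => by simpa using h'.sub h, fun h' => by simpa using h'.add h⟩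

theorem tendsto_inner_zero_of_mem_closure (hC : ∀ i, ‖a i‖ ≤ C) {s : Set E}
    (hs : ∀ v ∈ s, Tendsto (fun i => inner 𝕜 (a i) v) l (𝓝 0)) {v : E} (hv : v ∈ closure s) :
    Tendsto (fun i => inner 𝕜 (a i) v) l (𝓝 0) := by
  have hlip : ∀ i, LipschitzWith C.toNNReal (fun w => inner 𝕜 (a i) w) := fun i =>
    ContinuousLinearMap.lipschitzWith_of_opNorm_le (f := innerSL 𝕜 (a i)) <| by
      rw [innerSL_apply_norm]
      exact (hC i).trans (Real.le_coe_toNNReal C)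
  exact ((LipschitzWith.uniformEquicontinuous _ _ hlip).equicontinuous v).tendsto_of_mem_closure
    (f := 0) tendsto_const_nhds hs hv

end InnerLimits

section Operators

variable {E : Type} [NormedAddCommGroup E] [InnerProductSpace ℂ E]
  {Hsp dom domS : Submodule ℂ E} {T S : E →ₗ[ℂ] E} {P R : E →L[ℂ] E} {lam : ℂ}

theorem IsOrthProj.inner_apply_right (hP : IsOrthProj Hsp P) {u : E} (hu : u ∈ Hsp) (y : E) :
    inner ℂ u (P y) = inner ℂ u y := by
  have h := Submodule.inner_right_of_mem_orthogonal hu (hP y).2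
  rwa [inner_sub_right, sub_eq_zero, eq_comm] at h

theorem IsOrthProj.inner_apply_left (hP : IsOrthProj Hsp P) {u : E} (hu : u ∈ Hsp) (y : E) :
    inner ℂ (P y) u = inner ℂ y u := by
  rw [← inner_conj_symm, hP.inner_apply_right hu, inner_conj_symm]

theorem InResolvent.apply_orthProj (hR : InResolvent Hsp dom T lam R) (hP : IsOrthProj Hsp P)
    (t : E) : R (P t) = R t := by
  have h := hR.2.2 _ (hP t).2
  rwa [map_sub, sub_eq_zero, eq_comm] at h

theorem IsAdjointOp.inner_apply_resolvent (hadj : IsAdjointOp Hsp dom T domS S)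
    (hR : InResolvent Hsp domS S lam R) (hP : IsOrthProj Hsp P) {x : E} (hx : x ∈ dom)
    (t : E) : inner ℂ (T x) (R t) = inner ℂ x (P t) + lam * inner ℂ x (R t) := by
  obtain ⟨hRt, hSRt⟩ := hR.1 _ (hP t).1
  rw [hR.apply_orthProj hP] at hRt hSRt
  have hS : S (R t) = P t + lam • R t := by rw [← hSRt, sub_add_cancel]
  have hRt' : R t ∈ Hsp := hadj.1 hRt
  have hSH : S (R t) ∈ Hsp := hS ▸ Hsp.add_mem (hP t).1 (Hsp.smul_mem lam hRt')
  rw [(hadj.2 _ hRt' _ hSH).mp ⟨hRt, rfl⟩ x hx, hS, inner_add_right, inner_smul_right]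

def l2Graph (dom : Submodule ℂ E) (T : E →ₗ[ℂ] E) : Submodule ℂ (WithLp 2 (E × E)) :=
  dom.map ((WithLp.linearEquiv 2 ℂ (E × E)).symm.toLinearMap ∘ₗ LinearMap.id.prod T)

theorem mem_l2Graph {q : WithLp 2 (E × E)} :
    q ∈ l2Graph dom T ↔ ∃ v ∈ dom, WithLp.toLp 2 (v, T v) = q :=
  Submodule.mem_map

theorem IsClosedOp.eq_zero_of_mem_closure_l2Graph (hT : IsClosedOp dom T) {z : E}
    (hz : WithLp.toLp 2 (0, z) ∈ closure (l2Graph dom T : Set (WithLp 2 (E × E)))) :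
    z = 0 := by
  obtain ⟨q, hq, hlim⟩ := mem_closure_iff_seq_limit.mp hz
  choose v hv hvq using fun k => mem_l2Graph.mp (hq k)
  obtain rfl : q = fun k => WithLp.toLp 2 (v k, T (v k)) := funext fun k => (hvq k).symm
  have hfst : Tendsto v atTop (𝓝 0) :=
    ((WithLp.continuous_fst 2 E E).tendsto _).comp hlim
  have hsnd : Tendsto (fun k => T (v k)) atTop (𝓝 z) :=
    ((WithLp.continuous_snd 2 E E).tendsto _).comp hlim
  rw [← (hT v 0 z hv hfst hsnd).2, map_zero]

theorem IsAdjointOp.orthProj_snd_mem_of_mem_orthogonal_l2Graph (hT : ActsIn Hsp dom T)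
    (hP : IsOrthProj Hsp P) (hadj : IsAdjointOp Hsp dom T domS S)
    {q : WithLp 2 (E × E)} (hq : q ∈ (l2Graph dom T)ᗮ) : P q.snd ∈ domS := by
  refine ((hadj.2 _ (hP _).1 (-P q.fst) (Hsp.neg_mem (hP _).1)).mpr fun v hv => ?_).1
  have h := (Submodule.mem_orthogonal _ q).mp hq _ (mem_l2Graph.mpr ⟨v, hv, rfl⟩)
  simp only [WithLp.prod_inner_apply, WithLp.ofLp_fst, WithLp.ofLp_snd] at h
  rw [hP.inner_apply_right (hT.2.2 v hv), inner_neg_right, hP.inner_apply_right (hT.1 hv)]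
  linear_combination h

theorem IsAdjointOp.eq_zero_of_mem_orthogonal [CompleteSpace E] (hT : ActsIn Hsp dom T)
    (hTcl : IsClosedOp dom T) (hP : IsOrthProj Hsp P) (hadj : IsAdjointOp Hsp dom T domS S) {z : E} (hz : z ∈ Hsp)
    (hzS : z ∈ domSᗮ) : z = 0 := by
  -- `(0, z) ∈ graphᗮᗮ`, because `q ⊥ graph` forces `P q.2 ∈ dom S`.
  refine hTcl.eq_zero_of_mem_closure_l2Graph ?_
  rw [← Submodule.topologicalClosure_coe, ← Submodule.orthogonal_orthogonal_eq_closure,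
    SetLike.mem_coe, Submodule.mem_orthogonal]
  intro q hq
  simp only [WithLp.prod_inner_apply, WithLp.ofLp_fst, WithLp.ofLp_snd,
    inner_zero_right, zero_add]
  rw [← hP.inner_apply_left hz]
  exact Submodule.inner_right_of_mem_orthogonal
    (hadj.orthProj_snd_mem_of_mem_orthogonal_l2Graph hT hP hq) hzS

theorem IsAdjointOp.le_topologicalClosure_domain [CompleteSpace E] (hT : ActsIn Hsp dom T)
    (hTcl : IsClosedOp dom T) (hP : IsOrthProj Hsp P) (hadj : IsAdjointOp Hsp dom T domS S) :
    Hsp ≤ domS.topologicalClosure := by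
  intro z hz
  rw [← Submodule.orthogonal_orthogonal_eq_closure, Submodule.mem_orthogonal]
  intro w hw
  have hPw : P w ∈ domSᗮ := fun u hu => by
    rw [hP.inner_apply_right (hadj.1 hu)]
    exact hw u hu
  rw [← hP.inner_apply_left hz, hadj.eq_zero_of_mem_orthogonal hT hTcl hP (hP w).1 hPw,
    inner_zero_left]

end Operators

theorem stmt15_general
    (Hsp dom : Submodule ℂ H₀) (T : H₀ →ₗ[ℂ] H₀)
    (hT : ActsIn Hsp dom T) (hTcl : IsClosedOp dom T)
    (Hn domn : ℕ → Submodule ℂ H₀) (Tn : ℕ → H₀ →ₗ[ℂ] H₀)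
    (hTn : ∀ n, ActsIn (Hn n) (domn n) (Tn n))
    (P : H₀ →L[ℂ] H₀) (Pn : ℕ → H₀ →L[ℂ] H₀)
    (hP : IsOrthProj Hsp P) (hPn : ∀ n, IsOrthProj (Hn n) (Pn n))
    (hPconv : ∀ y : H₀, Tendsto (fun n => Pn n y) atTop (nhds (P y)))
    (domS : Submodule ℂ H₀) (S : H₀ →ₗ[ℂ] H₀)
    (domSn : ℕ → Submodule ℂ H₀) (Sn : ℕ → H₀ →ₗ[ℂ] H₀)
    (hadjT : IsAdjointOp Hsp dom T domS S)
    (hadjn : ∀ n, IsAdjointOp (Hn n) (domn n) (Tn n) (domSn n) (Sn n))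
    (hconvadj : GSRConv Hsp domS S Hn domSn Sn)
    (φ : ℕ → ℕ) (hφ : StrictMono φ) (x : ℕ → H₀)
    (hx : ∀ k, x k ∈ domn (φ k)) (hx1 : ∀ k, ‖x k‖ = 1) (hw : WeakTendsto x 0)
    (hbdd : ∃ C : ℝ, ∀ k, ‖Tn (φ k) (x k)‖ ≤ C) :
    WeakTendsto (fun k => Tn (φ k) (x k)) 0 := by
  obtain ⟨C, hC⟩ := hbdd
  obtain ⟨n₀, lam₀, R, Rn, hR, hRn, hRconv⟩ := hconvadj
  have hφ_top : Tendsto φ atTop atTop := hφ.tendsto_atTop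
  have hx_inner : ∀ {b : ℕ → H₀} {b₀ : H₀}, Tendsto b atTop (𝓝 b₀) →
      Tendsto (fun k => inner ℂ (x k) (b k)) atTop (𝓝 0) := fun hb =>
    (tendsto_inner_iff_of_norm_le (fun k => (hx1 k).le) hb).mpr (by simpa using hw _)
  have h_range : ∀ t, Tendsto (fun k => inner ℂ (Tn (φ k) (x k)) (R t)) atTop (𝓝 0) := by
    intro t
    have hRnt := (hRconv t).comp hφ_top
    rw [← tendsto_inner_iff_of_norm_le hC hRnt]
    have h := (hx_inner ((hPconv t).comp hφ_top)).add ((hx_inner hRnt).const_mul lam₀)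
    rw [zero_add, mul_zero] at h
    refine h.congr' ?_
    filter_upwards [hφ_top.eventually_ge_atTop n₀] with k hk
    exact ((hadjn _).inner_apply_resolvent (hRn _ hk) (hPn _) (hx k) t).symm
  have h_Hsp : ∀ v ∈ Hsp, Tendsto (fun k => inner ℂ (Tn (φ k) (x k)) v) atTop (𝓝 0) :=
    fun v hv => tendsto_inner_zero_of_mem_closure hC (s := domS)
      (fun u hu => by simpa only [hR.2.1 u hu] using h_range (S u - lam₀ • u))
      (hadjT.le_topologicalClosure_domain hT hTcl hP hv)
  intro y
  refine ((tendsto_inner_iff_of_norm_le hC ((hPconv y).comp hφ_top)).mpr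
    (h_Hsp _ (hP y).1)).congr fun k => ?_
  rw [sub_zero, Function.comp_apply, (hPn _).inner_apply_right ((hTn _).2.2 _ (hx k))]

theorem stmt15 [TopologicalSpace.SeparableSpace H₀]
    (Hsp dom : Submodule ℂ H₀) (T : H₀ →ₗ[ℂ] H₀)
    (hHcl : IsClosed ((Hsp : Set H₀)))
    (hT : ActsIn Hsp dom T) (hTcl : IsClosedOp dom T)
    (Hn domn : ℕ → Submodule ℂ H₀) (Tn : ℕ → H₀ →ₗ[ℂ] H₀)
    (hHncl : ∀ n, IsClosed ((Hn n : Set H₀)))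
    (hTn : ∀ n, ActsIn (Hn n) (domn n) (Tn n))
    (hTncl : ∀ n, IsClosedOp (domn n) (Tn n))
    (P : H₀ →L[ℂ] H₀) (Pn : ℕ → H₀ →L[ℂ] H₀)
    (hP : IsOrthProj Hsp P) (hPn : ∀ n, IsOrthProj (Hn n) (Pn n))
    (hPconv : ∀ y : H₀, Tendsto (fun n => Pn n y) atTop (nhds (P y)))
    (domS : Submodule ℂ H₀) (S : H₀ →ₗ[ℂ] H₀)
    (domSn : ℕ → Submodule ℂ H₀) (Sn : ℕ → H₀ →ₗ[ℂ] H₀)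
    (hadjT : IsAdjointOp Hsp dom T domS S)
    (hadjn : ∀ n, IsAdjointOp (Hn n) (domn n) (Tn n) (domSn n) (Sn n))
    (hconvadj : GSRConv Hsp domS S Hn domSn Sn)
    (φ : ℕ → ℕ) (hφ : StrictMono φ) (x : ℕ → H₀)
    (hx : ∀ k, x k ∈ domn (φ k)) (hx1 : ∀ k, ‖x k‖ = 1) (hw : WeakTendsto x 0)
    (hbdd : ∃ C : ℝ, ∀ k, ‖Tn (φ k) (x k)‖ ≤ C) :
    WeakTendsto (fun k => Tn (φ k) (x k)) 0 :=
  stmt15_general Hsp dom T hT hTcl Hn domn Tn hTn P Pn hP hPn hPconv domS S domSn Sn hadjT hadjn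
    hconvadj φ hφ x hx hx1 hw hbdd

end
end

section
/- The limiting essential ε-near spectrum Λ_{ess,ε}((T_n)) contains the set {λ + z : λ ∈ σ_ess((T_n)), |z| = ε}, and the essential ε-near spectrum Λ_{ess,ε}(T) contains {λ + z : λ ∈ σ_ess(T), |z| = ε}. Moreover both Λ_{ess,ε}(T) and Λ_{ess,ε}((T_n)) are closed subsets of ℂ. -/
open Filter Topology

noncomputable section

variable {H₀ : Type} [NormedAddCommGroup H₀] [InnerProductSpace ℂ H₀] [CompleteSpace H₀]

/-!
Shifting `lam` by `z` with `‖z‖ = eps` turns a weakly null singular sequence for `lam` into one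
along which `‖(T - lam - z) x‖ → ‖z‖ = eps`. For closedness, fix a dense sequence `(y j)` of `H₀`:
membership in the near spectrum is then equivalent to the existence, for every tolerance `δ` and
every `m`, of unit vectors in `dom(Tₙ)` for infinitely many `n` that are `δ`-orthogonal to
`y 0, …, y (m-1)` and have `‖(Tₙ - lam) x‖` within `δ` of `eps` (a diagonal extraction gives the
converse). Since `lam ↦ ‖(Tₙ - lam) x‖` is `1`-Lipschitz on unit vectors, this condition is closed
in `lam`.
-/

section NormEstimates

variable {𝕜 E : Type*} [NormedField 𝕜] [SeminormedAddCommGroup E] [NormedSpace 𝕜 E]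

lemma abs_norm_sub_smul_sub_norm_sub_smul_le (a u : E) (c d : 𝕜) :
    |‖a - c • u‖ - ‖a - d • u‖| ≤ ‖c - d‖ * ‖u‖ :=
  calc |‖a - c • u‖ - ‖a - d • u‖| ≤ ‖(a - c • u) - (a - d • u)‖ := abs_norm_sub_norm_le _ _
    _ = ‖c - d‖ * ‖u‖ := by rw [sub_sub_sub_cancel_left, ← sub_smul, norm_smul, norm_sub_rev]

lemma tendsto_norm_sub_add_smul {α : Type*} {l : Filter α} {a x : α → E} {c : 𝕜} (z : 𝕜)
    (hx : ∀ k, ‖x k‖ = 1) (h : Tendsto (fun k => ‖a k - c • x k‖) l (𝓝 0)) :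
    Tendsto (fun k => ‖a k - (c + z) • x k‖) l (𝓝 ‖z‖) := by
  refine tendsto_iff_norm_sub_tendsto_zero.2 <|
    squeeze_zero (fun _ => norm_nonneg _) (fun k => ?_) h
  calc ‖‖a k - (c + z) • x k‖ - ‖z‖‖
      = |‖(a k - c • x k) - z • x k‖ - ‖-(z • x k)‖| := by
        rw [Real.norm_eq_abs, norm_neg, norm_smul, hx, mul_one, add_smul, sub_sub]
    _ ≤ ‖a k - c • x k‖ := by simpa using abs_norm_sub_norm_le (a k - c • x k - z • x k) (-(z • x k))

end NormEstimates

lemma tendsto_inner_zero_of_denseRange {𝕜 E α ι : Type*} [RCLike 𝕜] [SeminormedAddCommGroup E]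
    [InnerProductSpace 𝕜 E] {l : Filter α} {x : α → E} {y : ι → E} {C : ℝ} (hy : DenseRange y)
    (hC : ∀ k, ‖x k‖ ≤ C) (h : ∀ j, Tendsto (fun k => inner 𝕜 (x k) (y j)) l (𝓝 0)) (w : E) :
    Tendsto (fun k => inner 𝕜 (x k) w) l (𝓝 0) := by
  have hlip : ∀ k, LipschitzWith C.toNNReal (fun v => inner 𝕜 (x k) v) := fun k =>
    LipschitzWith.of_dist_le' fun u v => by
      rw [dist_eq_norm, dist_eq_norm, ← inner_sub_right]
      exact (norm_inner_le_norm _ _).trans (by gcongr; exact hC k)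
  have hclosed : IsClosed {v : E | Tendsto (fun k => inner 𝕜 (x k) v) l (𝓝 0)} :=
    (LipschitzWith.uniformEquicontinuous _ _ hlip).equicontinuous.isClosed_setOfPred_tendsto
      (f := 0) continuous_const
  exact hy.induction_on w hclosed h

section LimEssNear

variable {E : Type} [NormedAddCommGroup E] [InnerProductSpace ℂ E]

lemma essNear_iff_limEssNear_const (dom : Submodule ℂ E) (T : E →ₗ[ℂ] E) (eps : ℝ) (lam : ℂ) :
    EssNear dom T eps lam ↔ LimEssNear (fun _ => dom) (fun _ => T) eps lam :=
  ⟨fun ⟨x, hx⟩ => ⟨id, x, strictMono_id, hx⟩, fun ⟨_, x, _, hx⟩ => ⟨x, hx⟩⟩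

def LimEssNearApprox (y : ℕ → E) (domn : ℕ → Submodule ℂ E) (Tn : ℕ → E →ₗ[ℂ] E)
    (eps : ℝ) (lam : ℂ) : Prop :=
  ∀ δ > 0, ∀ m, ∃ᶠ n in atTop, ∃ x ∈ domn n, ‖x‖ = 1 ∧ (∀ j < m, ‖inner ℂ x (y j)‖ < δ) ∧
    dist ‖Tn n x - lam • x‖ eps < δ

variable {y : ℕ → E} {domn : ℕ → Submodule ℂ E} {Tn : ℕ → E →ₗ[ℂ] E} {eps : ℝ}

lemma LimEssNear.limEssNearApprox {lam : ℂ} (h : LimEssNear domn Tn eps lam) :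
    LimEssNearApprox y domn Tn eps lam := by
  obtain ⟨φ, x, hφ, hx, hx1, hweak, hnorm⟩ := h
  intro δ hδ m
  have hinner : ∀ j, ∀ᶠ k in atTop, ‖inner ℂ (x k) (y j)‖ < δ := fun j => by
    simpa using ((hweak (y j)).norm).eventually_lt_const (by simpa using hδ)
  have hinner_lt : ∀ᶠ k in atTop, ∀ j < m, ‖inner ℂ (x k) (y j)‖ < δ :=
    (eventually_all_finite (Set.finite_lt_nat m)).2 fun j _ => hinner j
  refine hφ.tendsto_atTop.frequently (Eventually.frequently ?_)
  filter_upwards [hinner_lt, Metric.tendsto_nhds.1 hnorm δ hδ] with k hk hk'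
  exact ⟨x k, hx k, hx1 k, hk, hk'⟩

lemma LimEssNearApprox.limEssNear (hy : DenseRange y) {lam : ℂ}
    (h : LimEssNearApprox y domn Tn eps lam) : LimEssNear domn Tn eps lam := by
  obtain ⟨φ, hφ, hgood⟩ := extraction_forall_of_frequently fun k => h _ Nat.one_div_pos_of_nat k
  choose x hx hx1 hinner hnorm using hgood
  refine ⟨φ, x, hφ, hx, hx1, fun w => ?_, ?_⟩
  · simp only [sub_zero]
    refine tendsto_inner_zero_of_denseRange hy (fun k => (hx1 k).le) (fun j => ?_) w
    refine squeeze_zero_norm' ?_ tendsto_one_div_add_atTop_nhds_zero_nat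
    filter_upwards [eventually_gt_atTop j] with k hk using (hinner k j hk).le
  · exact tendsto_iff_dist_tendsto_zero.2 <| squeeze_zero (fun _ => dist_nonneg)
      (fun k => (hnorm k).le) tendsto_one_div_add_atTop_nhds_zero_nat

lemma limEssNear_iff_limEssNearApprox (hy : DenseRange y) {lam : ℂ} :
    LimEssNear domn Tn eps lam ↔ LimEssNearApprox y domn Tn eps lam :=
  ⟨LimEssNear.limEssNearApprox, LimEssNearApprox.limEssNear hy⟩

lemma isClosed_setOf_limEssNearApprox : IsClosed {lam | LimEssNearApprox y domn Tn eps lam} := by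
  refine isClosed_of_closure_subset fun lam hlam δ hδ m => ?_
  obtain ⟨μ, hμ, hdist⟩ := Metric.mem_closure_iff.1 hlam (δ / 2) (half_pos hδ)
  refine (hμ (δ / 2) (half_pos hδ) m).mono fun n ⟨x, hx, hx1, hinner, hnorm⟩ =>
    ⟨x, hx, hx1, fun j hj => (hinner j hj).trans (half_lt_self hδ), ?_⟩
  have hshift : dist ‖Tn n x - lam • x‖ ‖Tn n x - μ • x‖ ≤ dist lam μ := by
    simpa [Real.dist_eq, hx1, dist_eq_norm] using
      abs_norm_sub_smul_sub_norm_sub_smul_le (Tn n x) x lam μ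
  linarith [dist_triangle ‖Tn n x - lam • x‖ ‖Tn n x - μ • x‖ eps]

lemma isClosed_setOf_limEssNear [TopologicalSpace.SeparableSpace E] :
    IsClosed {lam | LimEssNear domn Tn eps lam} := by
  simpa only [limEssNear_iff_limEssNearApprox (TopologicalSpace.denseRange_denseSeq E)] using
    isClosed_setOf_limEssNearApprox

end LimEssNear

theorem stmt16_general [TopologicalSpace.SeparableSpace H₀]
    (dom : Submodule ℂ H₀) (T : H₀ →ₗ[ℂ] H₀)
    (domn : ℕ → Submodule ℂ H₀) (Tn : ℕ → H₀ →ₗ[ℂ] H₀)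
    (eps : ℝ) :
    (∀ lam z : ℂ, EssSpectrum dom T lam → ‖z‖ = eps → EssNear dom T eps (lam + z)) ∧
      (∀ lam z : ℂ, LimEssSpectrum domn Tn lam → ‖z‖ = eps →
        LimEssNear domn Tn eps (lam + z)) ∧
      IsClosed {lam : ℂ | EssNear dom T eps lam} ∧
      IsClosed {lam : ℂ | LimEssNear domn Tn eps lam} := by
  refine ⟨?_, ?_, ?_, isClosed_setOf_limEssNear⟩
  · rintro lam z ⟨x, hx, hx1, hweak, hT⟩ rfl
    exact ⟨x, hx, hx1, hweak, tendsto_norm_sub_add_smul z hx1 hT⟩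
  · rintro lam z ⟨φ, x, hφ, hx, hx1, hweak, hT⟩ rfl
    exact ⟨φ, x, hφ, hx, hx1, hweak, tendsto_norm_sub_add_smul z hx1 hT⟩
  · simpa only [essNear_iff_limEssNear_const] using
      isClosed_setOf_limEssNear (domn := fun _ => dom) (Tn := fun _ => T) (eps := eps)

theorem stmt16 [TopologicalSpace.SeparableSpace H₀]
    (Hsp dom : Submodule ℂ H₀) (T : H₀ →ₗ[ℂ] H₀)
    (hHcl : IsClosed ((Hsp : Set H₀)))
    (hT : ActsIn Hsp dom T) (hTcl : IsClosedOp dom T)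
    (Hn domn : ℕ → Submodule ℂ H₀) (Tn : ℕ → H₀ →ₗ[ℂ] H₀)
    (hHncl : ∀ n, IsClosed ((Hn n : Set H₀)))
    (hTn : ∀ n, ActsIn (Hn n) (domn n) (Tn n))
    (hTncl : ∀ n, IsClosedOp (domn n) (Tn n))
    (eps : ℝ) (heps : 0 < eps) :
    (∀ lam z : ℂ, EssSpectrum dom T lam → ‖z‖ = eps → EssNear dom T eps (lam + z)) ∧
      (∀ lam z : ℂ, LimEssSpectrum domn Tn lam → ‖z‖ = eps →
        LimEssNear domn Tn eps (lam + z)) ∧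
      IsClosed {lam : ℂ | EssNear dom T eps lam} ∧
      IsClosed {lam : ℂ | LimEssNear domn Tn eps lam} :=
  stmt16_general dom T domn Tn eps

end
end

section
/- If there exists λ_0 ∈ ⋂_n ρ(T_n) ∩ ρ(T) such that the resolvents ((T_n − λ_0)^{-1}) form a discretely compact sequence and (T_n* − conj(λ_0))^{-1}P_n → (T* − conj(λ_0))^{-1}P strongly, then the limiting essential ε-near spectrum Λ_{ess,ε}((T_n)) is empty for every ε > 0. -/
open Filter Topology

noncomputable section

variable {H₀ : Type} [NormedAddCommGroup H₀] [InnerProductSpace ℂ H₀] [CompleteSpace H₀]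

/-!
Suppose `xₖ ∈ dom(T_{φ k})` are unit vectors, `xₖ ⇀ 0`, and `‖(T_{φ k} - λ) xₖ‖ → ε`. Then
`yₖ := (T_{φ k} - λ₀) xₖ` is bounded, so by discrete compactness of the resolvents a subsequence
of `xₖ = (T_{φ k} - λ₀)⁻¹ yₖ` converges in norm. Its limit is also the weak limit `0`,
contradicting `‖xₖ‖ = 1`.
-/

theorem exists_norm_sub_smul_le_of_tendsto {E : Type*} [NormedAddCommGroup E] [NormedSpace ℂ E]
    {f x : ℕ → E} (hnorm : ∀ k, ‖x k‖ = 1) {lam : ℂ} {eps : ℝ}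
    (hf : Tendsto (fun k => ‖f k - lam • x k‖) atTop (𝓝 eps)) (lam₀ : ℂ) :
    ∃ C : ℝ, ∀ k, ‖f k - lam₀ • x k‖ ≤ C := by
  obtain ⟨M, hM⟩ := hf.bddAbove_range
  refine ⟨M + ‖lam - lam₀‖, fun k => ?_⟩
  calc ‖f k - lam₀ • x k‖ = ‖(f k - lam • x k) + (lam - lam₀) • x k‖ := by
        rw [sub_smul]; abel_nf
    _ ≤ ‖f k - lam • x k‖ + ‖(lam - lam₀) • x k‖ := norm_add_le _ _
    _ ≤ M + ‖lam - lam₀‖ := by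
        rw [norm_smul, hnorm k, mul_one]; exact add_le_add (hM ⟨k, rfl⟩) le_rfl

section

variable {E : Type} [NormedAddCommGroup E] [InnerProductSpace ℂ E]

theorem WeakTendsto.comp_strictMono {x : ℕ → E} {x₀ : E} (hx : WeakTendsto x x₀) {ψ : ℕ → ℕ}
    (hψ : StrictMono ψ) : WeakTendsto (x ∘ ψ) x₀ :=
  fun y => (hx y).comp hψ.tendsto_atTop

theorem WeakTendsto.eq_of_tendsto {x : ℕ → E} {x₀ z : E} (hx : WeakTendsto x x₀)
    (hz : Tendsto x atTop (𝓝 z)) : z = x₀ := by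
  have hlim : Tendsto (fun n => (inner ℂ (x n - x₀) (z - x₀) : ℂ)) atTop
      (𝓝 (inner ℂ (z - x₀) (z - x₀))) :=
    (hz.sub tendsto_const_nhds).inner tendsto_const_nhds
  exact sub_eq_zero.mp (inner_self_eq_zero.mp (tendsto_nhds_unique hlim (hx (z - x₀))))

theorem not_tendsto_of_weakTendsto_zero_of_norm_eq_one {x : ℕ → E} (hx : WeakTendsto x 0)
    (hnorm : ∀ k, ‖x k‖ = 1) (z : E) : ¬ Tendsto x atTop (𝓝 z) := by
  intro hz
  have hnorm_lim : Tendsto (fun k => ‖x k‖) atTop (𝓝 ‖z‖) := hz.norm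
  rw [hx.eq_of_tendsto hz, norm_zero] at hnorm_lim
  simp only [hnorm] at hnorm_lim
  exact one_ne_zero (tendsto_nhds_unique tendsto_const_nhds hnorm_lim)

theorem ActsIn.sub_smul_mem {Hsp dom : Submodule ℂ E} {T : E →ₗ[ℂ] E} (hT : ActsIn Hsp dom T)
    {x : E} (hx : x ∈ dom) (lam : ℂ) : T x - lam • x ∈ Hsp :=
  Hsp.sub_mem (hT.2.2 x hx) (Hsp.smul_mem lam (hT.1 hx))

theorem DiscretelyCompact.exists_tendsto_of_bounded {Hsp : Submodule ℂ E}
    {Hn domn : ℕ → Submodule ℂ E} {Tn : ℕ → E →ₗ[ℂ] E} {lam₀ : ℂ} {Rn : ℕ → E →L[ℂ] E}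
    (hdc : DiscretelyCompact Hsp Hn Rn) (hTn : ∀ n, ActsIn (Hn n) (domn n) (Tn n))
    (hres : ∀ n, InResolvent (Hn n) (domn n) (Tn n) lam₀ (Rn n))
    {φ : ℕ → ℕ} (hφ : StrictMono φ) {x : ℕ → E} (hdom : ∀ k, x k ∈ domn (φ k))
    (hbdd : ∃ C : ℝ, ∀ k, ‖Tn (φ k) (x k) - lam₀ • x k‖ ≤ C) :
    ∃ (ψ : ℕ → ℕ) (z : E), StrictMono ψ ∧ Tendsto (x ∘ ψ) atTop (𝓝 z) := by
  obtain ⟨ψ, z, hψ, -, hconv⟩ :=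
    hdc φ _ hφ (fun k => (hTn (φ k)).sub_smul_mem (hdom k) lam₀) hbdd
  have hRx : ∀ k, Rn (φ (ψ k)) (Tn (φ (ψ k)) (x (ψ k)) - lam₀ • x (ψ k)) = x (ψ k) :=
    fun k => (hres (φ (ψ k))).2.1 _ (hdom (ψ k))
  simp only [hRx] at hconv
  exact ⟨ψ, z, hψ, hconv⟩

end

theorem stmt18_general (Hsp : Submodule ℂ H₀)
    (Hn domn : ℕ → Submodule ℂ H₀) (Tn : ℕ → H₀ →ₗ[ℂ] H₀)
    (hTn : ∀ n, ActsIn (Hn n) (domn n) (Tn n))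
    (lam₀ : ℂ) (Rn : ℕ → H₀ →L[ℂ] H₀)
    (hres : ∀ n, InResolvent (Hn n) (domn n) (Tn n) lam₀ (Rn n))
    (hdc : DiscretelyCompact Hsp Hn Rn) :
    ∀ eps : ℝ, 0 < eps → {lam : ℂ | LimEssNear domn Tn eps lam} = ∅ := by
  intro eps _
  refine Set.eq_empty_of_forall_notMem fun lam ⟨φ, x, hφ, hdom, hnorm, hweak, htend⟩ => ?_
  obtain ⟨ψ, z, hψ, hconv⟩ := hdc.exists_tendsto_of_bounded hTn hres hφ hdom
    (exists_norm_sub_smul_le_of_tendsto hnorm htend lam₀)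
  exact not_tendsto_of_weakTendsto_zero_of_norm_eq_one (hweak.comp_strictMono hψ)
    (fun k => hnorm (ψ k)) z hconv

theorem stmt18 [TopologicalSpace.SeparableSpace H₀]
    (Hsp dom : Submodule ℂ H₀) (T : H₀ →ₗ[ℂ] H₀)
    (hHcl : IsClosed ((Hsp : Set H₀)))
    (hT : ActsIn Hsp dom T) (hTcl : IsClosedOp dom T)
    (Hn domn : ℕ → Submodule ℂ H₀) (Tn : ℕ → H₀ →ₗ[ℂ] H₀)
    (hHncl : ∀ n, IsClosed ((Hn n : Set H₀)))
    (hTn : ∀ n, ActsIn (Hn n) (domn n) (Tn n))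
    (hTncl : ∀ n, IsClosedOp (domn n) (Tn n))
    (P : H₀ →L[ℂ] H₀) (Pn : ℕ → H₀ →L[ℂ] H₀)
    (hP : IsOrthProj Hsp P) (hPn : ∀ n, IsOrthProj (Hn n) (Pn n))
    (hPconv : ∀ y : H₀, Tendsto (fun n => Pn n y) atTop (nhds (P y)))
    (lam₀ : ℂ) (R : H₀ →L[ℂ] H₀) (Rn : ℕ → H₀ →L[ℂ] H₀)
    (hresT : InResolvent Hsp dom T lam₀ R)
    (hres : ∀ n, InResolvent (Hn n) (domn n) (Tn n) lam₀ (Rn n))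
    (hdc : DiscretelyCompact Hsp Hn Rn)
    (hadjconv : ∀ y : H₀, Tendsto (fun n => (ContinuousLinearMap.adjoint (Rn n)) (Pn n y))
      atTop (nhds ((ContinuousLinearMap.adjoint R) (P y)))) :
    ∀ eps : ℝ, 0 < eps → {lam : ℂ | LimEssNear domn Tn eps lam} = ∅ :=
  stmt18_general Hsp Hn domn Tn hTn lam₀ Rn hres hdc
end
end

section
/- Let T be a closed densely defined operator in a Hilbert space such that ‖(T − λ)^{-1}‖ = 1/ε for all λ in some nonempty open subset U ⊂ ρ(T). Then the resolvent set ρ(T) is contained in Λ_{ess,ε}(T) ∩ (Λ_{ess,ε}(T*))*; more precisely, every λ for which T + K − λ is boundedly invertible for some compact operator K belongs to Λ_{ess,ε}(T) ∩ (Λ_{ess,ε}(T*))*. -/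
open Filter Topology

noncomputable section

variable {H₀ : Type} [NormedAddCommGroup H₀] [InnerProductSpace ℂ H₀] [CompleteSpace H₀]

/-!
Fix `λ₀ ∈ U` and put `R₀ = (T - λ₀)⁻¹`, `M = ‖R₀‖ = 1/ε`. For small `μ` the resolvent
`R₀ + μ R₀² + μ² R₀³ + O(μ³)` at `λ₀ + μ` still has norm at most `M`; averaging the squared norm of
its value at `y` over `μ ∈ r·{1, i, -1, -i}` kills the cross terms and gives
`‖R₀ y‖² + r² ‖R₀² y‖² ≤ M² + O(r³)`. Hence there are unit vectors `vₙ` with `‖R₀ vₙ‖ → M` and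
`R₀² vₙ → 0`, so `R₀ vₙ ⇀ 0` because `R₀` is injective. If `R = (T + K - λ)⁻¹` with `K` compact,
the second resolvent identity shows `R vₙ - R₀ vₙ → 0`, and `R vₙ / ‖R vₙ‖` is a weakly null
unit sequence on which `‖(T - λ) ·‖ → 1/M = ε`. The same argument for the adjoints `R₀†`, `R†`,
`K†` gives `conj λ ∈ Λ_{ess,ε}(T*)`.
-/

open ContinuousLinearMap
open scoped InnerProduct InnerProductSpace

theorem sub_smul_pow_mul_eq_of_eq_add_smul_mul {𝕜 R : Type*} [CommRing 𝕜] [Ring R]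
    [Algebra 𝕜 R] {A B : R} {μ : 𝕜} (h : B = A + μ • (A * B)) :
    B - μ ^ 3 • (A ^ 3 * B) = A + μ • A ^ 2 + μ ^ 2 • A ^ 3 := by
  have h₁ : A * B = A ^ 2 + μ • (A ^ 2 * B) := by
    conv_lhs => rw [h]
    rw [mul_add, mul_smul_comm, ← mul_assoc, sq]
  have h₂ : A ^ 2 * B = A ^ 3 + μ • (A ^ 3 * B) := by
    conv_lhs => rw [h]
    rw [mul_add, mul_smul_comm, ← mul_assoc, ← pow_succ]
  rw [h₂] at h₁
  rw [h₁] at h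
  nth_rewrite 1 [h]
  module

section
open Complex

variable {E : Type*} [NormedAddCommGroup E] [InnerProductSpace ℂ E]

theorem sum_norm_sq_quarter_turns (u v w : E) :
    ‖u + v + w‖ ^ 2 + ‖u + I • v - w‖ ^ 2 + ‖u - v + w‖ ^ 2 + ‖u - I • v - w‖ ^ 2
      = 4 * (‖u‖ ^ 2 + ‖v‖ ^ 2 + ‖w‖ ^ 2) := by
  have h₁ := parallelogram_law_with_norm ℂ (u + w) v
  have h₂ := parallelogram_law_with_norm ℂ (u - w) (I • v)
  have h₃ := parallelogram_law_with_norm ℂ u w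
  rw [norm_smul, norm_I, one_mul] at h₂
  rw [show u + v + w = u + w + v by abel, show u + I • v - w = u - w + I • v by abel,
    show u - v + w = u + w - v by abel, show u - I • v - w = u - w - I • v by abel]
  linarith

theorem norm_sq_add_sq_mul_norm_sq_le {u a b : E} {r c : ℝ} (hr : 0 ≤ r)
    (h : ∀ μ : ℂ, ‖μ‖ = r → ‖u + μ • a + μ ^ 2 • b‖ ≤ c) :
    ‖u‖ ^ 2 + r ^ 2 * ‖a‖ ^ 2 ≤ c ^ 2 := by
  have hsq : ∀ μ : ℂ, ‖μ‖ = r → ‖u + μ • a + μ ^ 2 • b‖ ^ 2 ≤ c ^ 2 := fun μ hμ =>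
    pow_le_pow_left₀ (norm_nonneg _) (h μ hμ) 2
  have h₁ := hsq r (by simp [abs_of_nonneg hr])
  have h₂ := hsq (I * r) (by simp [abs_of_nonneg hr])
  have h₃ := hsq (-r) (by simp [abs_of_nonneg hr])
  have h₄ := hsq (-I * r) (by simp [abs_of_nonneg hr])
  have hsum := sum_norm_sq_quarter_turns u ((r : ℂ) • a) ((r : ℂ) ^ 2 • b)
  rw [show u + (I * r) • a + (I * r) ^ 2 • b = u + I • (r : ℂ) • a - (r : ℂ) ^ 2 • b by
    rw [mul_pow, I_sq]; module] at h₂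
  rw [show u + (-r : ℂ) • a + (-r : ℂ) ^ 2 • b = u - (r : ℂ) • a + (r : ℂ) ^ 2 • b by
    module] at h₃
  rw [show u + (-I * r) • a + (-I * r) ^ 2 • b = u - I • (r : ℂ) • a - (r : ℂ) ^ 2 • b by
    rw [mul_pow, neg_sq, I_sq]; module] at h₄
  rw [norm_smul, norm_smul, norm_pow, norm_real, Real.norm_of_nonneg hr] at hsum
  nlinarith [sq_nonneg ‖b‖, pow_nonneg hr 4]

theorem norm_apply_sq_add_le_of_resolvent_bound {A : E →L[ℂ] E} {r : ℝ} (hr : 0 ≤ r)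
    (h : ∀ μ : ℂ, ‖μ‖ = r → ∃ B : E →L[ℂ] E, ‖B‖ ≤ ‖A‖ ∧ B = A + μ • (A * B))
    {y : E} (hy : ‖y‖ ≤ 1) :
    ‖A y‖ ^ 2 + r ^ 2 * ‖A (A y)‖ ^ 2 ≤ (‖A‖ + r ^ 3 * ‖A‖ ^ 4) ^ 2 := by
  refine norm_sq_add_sq_mul_norm_sq_le (b := A (A (A y))) hr fun μ hμ => ?_
  obtain ⟨B, hB, hBeq⟩ := h μ hμ
  have hy' : A y + μ • A (A y) + μ ^ 2 • A (A (A y)) = B y - μ ^ 3 • (A ^ 3 * B) y := by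
    have := congrArg (fun C => C y) (sub_smul_pow_mul_eq_of_eq_add_smul_mul hBeq)
    simpa [pow_succ] using this.symm
  have hB3 : ‖A ^ 3 * B‖ ≤ ‖A‖ ^ 4 :=
    calc ‖A ^ 3 * B‖ ≤ ‖A‖ ^ 3 * ‖B‖ :=
          (norm_mul_le _ _).trans (by gcongr; exact norm_pow_le' A (by norm_num))
      _ ≤ ‖A‖ ^ 4 := by rw [pow_succ ‖A‖ 3]; gcongr
  rw [hy']
  calc ‖B y - μ ^ 3 • (A ^ 3 * B) y‖ ≤ ‖B y‖ + ‖μ‖ ^ 3 * ‖(A ^ 3 * B) y‖ := by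
        rw [← norm_pow, ← norm_smul]; exact norm_sub_le _ _
    _ ≤ ‖A‖ + r ^ 3 * ‖A‖ ^ 4 := by
        rw [hμ]
        gcongr
        · exact (B.le_of_opNorm_le hB y).trans (mul_le_of_le_one_right (norm_nonneg _) hy)
        · exact ((A ^ 3 * B).le_of_opNorm_le hB3 y).trans
            (mul_le_of_le_one_right (by positivity) hy)

theorem exists_norm_eq_one_lt_norm_apply {A : E →L[ℂ] E} {c : ℝ} (hc : 0 ≤ c) (h : c < ‖A‖) :
    ∃ y : E, ‖y‖ = 1 ∧ c < ‖A y‖ := by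
  obtain ⟨x, hx, hcx⟩ := A.exists_lt_apply_of_lt_opNorm h
  have hx0 : x ≠ 0 := by rintro rfl; simp at hcx; linarith
  refine ⟨‖x‖⁻¹ • x, norm_smul_inv_norm hx0, hcx.trans_le ?_⟩
  rw [map_smul_of_tower, norm_smul, norm_inv, norm_norm]
  exact le_mul_of_one_le_left (norm_nonneg _) (one_le_inv₀ (norm_pos_iff.mpr hx0) |>.mpr hx.le)

theorem sq_le_mul_of_sq_add_sq_mul_sq_le {M a b ρ : ℝ} (hM : 0 < M) (hρ : 0 < ρ) (hρ₁ : ρ ≤ 1)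
    (ha : M * (1 - ρ ^ 3) < a) (h : a ^ 2 + ρ ^ 2 * b ^ 2 ≤ (M + ρ ^ 3 * M ^ 4) ^ 2) :
    b ^ 2 ≤ ρ * (2 * M ^ 2 + 2 * M ^ 5 + M ^ 8) := by
  have hρ₆ : ρ ^ 6 ≤ ρ ^ 3 := pow_le_pow_of_le_one hρ.le hρ₁ (by norm_num)
  have hρ₃ : ρ ^ 3 ≤ 1 := pow_le_one₀ hρ.le hρ₁
  have ha' : M ^ 2 * (1 - 2 * ρ ^ 3) ≤ a ^ 2 := by
    have := pow_le_pow_left₀ (by nlinarith) ha.le 2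
    nlinarith [pow_pos hM 2, pow_nonneg hρ.le 6]
  have : ρ ^ 2 * b ^ 2 ≤ ρ ^ 2 * (ρ * (2 * M ^ 2 + 2 * M ^ 5 + M ^ 8)) := by
    nlinarith [mul_le_mul_of_nonneg_left hρ₆ (pow_nonneg hM.le 8)]
  exact le_of_mul_le_mul_left this (by positivity)

theorem exists_seq_norm_apply_tendsto_opNorm {A : E →L[ℂ] E} {r₀ : ℝ} (hA : 0 < ‖A‖)
    (hr₀ : 0 < r₀)
    (h : ∀ μ : ℂ, ‖μ‖ < r₀ → ∃ B : E →L[ℂ] E, ‖B‖ ≤ ‖A‖ ∧ B = A + μ • (A * B)) :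
    ∃ v : ℕ → E, (∀ n, ‖v n‖ = 1) ∧ Tendsto (fun n => ‖A (v n)‖) atTop (𝓝 ‖A‖) ∧
      Tendsto (fun n => A (A (v n))) atTop (𝓝 0) := by
  set M := ‖A‖
  set r : ℕ → ℝ := fun n => min r₀ 1 / (n + 2)
  have hr_pos : ∀ n, 0 < r n := fun n => by positivity
  have hr_lt : ∀ n, r n < min r₀ 1 := fun n =>
    div_lt_self (by positivity) (by linarith [n.cast_nonneg (α := ℝ)])
  have hr_lt₀ : ∀ n, r n < r₀ := fun n => (hr_lt n).trans_le (min_le_left _ _)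
  have hr_le_one : ∀ n, r n ≤ 1 := fun n => (hr_lt n).le.trans (min_le_right _ _)
  have hr_lim : Tendsto r atTop (𝓝 0) :=
    tendsto_const_nhds.div_atTop (tendsto_atTop_add_const_right _ _ tendsto_natCast_atTop_atTop)
  -- the defect `M - ‖A y‖ < M r³` is `o(r²)`, so it cannot mask the term `r² ‖A² y‖²`
  have hsel : ∀ n, ∃ y : E, ‖y‖ = 1 ∧ M * (1 - r n ^ 3) < ‖A y‖ := fun n =>
    exists_norm_eq_one_lt_norm_apply
      (mul_nonneg hA.le (sub_nonneg.mpr (pow_le_one₀ (hr_pos n).le (hr_le_one n))))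
      (mul_lt_of_lt_one_right hA (by linarith [pow_pos (hr_pos n) 3]))
  choose v hv hvA using hsel
  have hvM : ∀ n, ‖A (v n)‖ ≤ M := fun n => (A.le_opNorm _).trans (by rw [hv n, mul_one])
  refine ⟨v, hv, ?_, ?_⟩
  · refine tendsto_of_tendsto_of_tendsto_of_le_of_le ?_ tendsto_const_nhds (fun n => (hvA n).le) hvM
    simpa using ((tendsto_const_nhds (x := (1 : ℝ))).sub (hr_lim.pow 3)).const_mul M
  · have hbound : ∀ n, ‖A (A (v n))‖ ^ 2 ≤ r n * (2 * M ^ 2 + 2 * M ^ 5 + M ^ 8) := fun n =>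
      sq_le_mul_of_sq_add_sq_mul_sq_le hA (hr_pos n) (hr_le_one n) (hvA n)
        (norm_apply_sq_add_le_of_resolvent_bound (hr_pos n).le
          (fun μ hμ => h μ (hμ ▸ hr_lt₀ n)) (hv n).le)
    have hsq : Tendsto (fun n => ‖A (A (v n))‖ ^ 2) atTop (𝓝 0) :=
      squeeze_zero (fun n => by positivity) hbound (by simpa using hr_lim.mul_const _)
    rw [tendsto_zero_iff_norm_tendsto_zero]
    simpa using hsq.sqrt

theorem tendsto_norm_of_tendsto_sub {F : Type*} [SeminormedAddCommGroup F] {x y : ℕ → F} {L : ℝ}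
    (hx : Tendsto (fun n => ‖x n‖) atTop (𝓝 L)) (hxy : Tendsto (fun n => y n - x n) atTop (𝓝 0)) :
    Tendsto (fun n => ‖y n‖) atTop (𝓝 L) := by
  have hdiff : Tendsto (fun n => ‖y n‖ - ‖x n‖) atTop (𝓝 0) :=
    squeeze_zero_norm (fun n => abs_norm_sub_norm_le _ _)
      (tendsto_zero_iff_norm_tendsto_zero.mp hxy)
  simpa using hx.add hdiff

end

section
variable {E : Type} [NormedAddCommGroup E] [InnerProductSpace ℂ E]

theorem weakTendsto_zero_iff {x : ℕ → E} :
    WeakTendsto x 0 ↔ ∀ y, Tendsto (fun n => ⟪x n, y⟫_ℂ) atTop (𝓝 0) := by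
  simp only [WeakTendsto, sub_zero]

theorem WeakTendsto.of_tendsto_sub {x y : ℕ → E} (hx : WeakTendsto x 0)
    (hxy : Tendsto (fun n => y n - x n) atTop (𝓝 0)) : WeakTendsto y 0 := by
  rw [weakTendsto_zero_iff] at hx ⊢
  intro z
  have := (hxy.inner (tendsto_const_nhds (x := z))).add (hx z)
  simpa only [inner_zero_left, zero_add, inner_sub_left, sub_add_cancel] using this

theorem weakTendsto_zero_of_tendsto_apply [CompleteSpace E] {A : E →L[ℂ] E}
    (hA : Function.Injective A) {x : ℕ → E} {c : ℝ} (hx : ∀ n, ‖x n‖ ≤ c)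
    (hAx : Tendsto (fun n => A (x n)) atTop (𝓝 0)) : WeakTendsto x 0 := by
  have hequi : Equicontinuous fun n => (innerSL ℂ (x n) : E → ℂ) := by
    have := (NormedSpace.equicontinuous_TFAE fun n => innerSL ℂ (x n)).out 5 1
    exact this.mp ⟨c, fun n => by simpa using hx n⟩
  have hclosed : IsClosed {z | Tendsto (fun n => ⟪x n, z⟫_ℂ) atTop (𝓝 0)} :=
    hequi.isClosed_setOfPred_tendsto (f := fun _ => 0) continuous_const
  have hdense : Dense (A†.range : Set E) := by
    rw [Submodule.dense_iff_topologicalClosure_eq_top, Submodule.topologicalClosure_eq_top_iff,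
      orthogonal_range, adjoint_adjoint, LinearMap.ker_eq_bot.mpr hA]
  have hsub : (A†.range : Set E) ⊆
      {z | Tendsto (fun n => ⟪x n, z⟫_ℂ) atTop (𝓝 0)} := by
    rintro _ ⟨w, rfl⟩
    simpa [adjoint_inner_right] using hAx.inner (tendsto_const_nhds (x := w))
  rw [weakTendsto_zero_iff]
  exact fun z => hclosed.closure_subset_iff.mpr hsub (hdense.closure_eq ▸ Set.mem_univ z)

def IsCompletelyContinuous (C : E →L[ℂ] E) : Prop :=
  ∀ x : ℕ → E, (∃ c, ∀ n, ‖x n‖ ≤ c) → WeakTendsto x 0 → Tendsto (fun n => C (x n)) atTop (𝓝 0)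

theorem IsCompactOperator.isCompletelyContinuous [CompleteSpace E] {K : E →L[ℂ] E}
    (hK : IsCompactOperator K) : IsCompletelyContinuous K := by
  rintro x ⟨c, hx⟩ hweak
  rw [weakTendsto_zero_iff] at hweak
  refine tendsto_of_subseq_tendsto fun ns hns => ?_
  have hmem : ∀ k, K (x (ns k)) ∈ closure (K '' Metric.closedBall 0 c) := fun k =>
    subset_closure ⟨x (ns k), by simpa using hx (ns k), rfl⟩
  obtain ⟨a, -, φ, hφ, hlim⟩ :=
    (hK.isCompact_closure_image_closedBall c).tendsto_subseq hmem
  have hweakK : ∀ z, Tendsto (fun k => ⟪K (x (ns (φ k))), z⟫_ℂ) atTop (𝓝 0) := fun z => by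
    simpa [Function.comp_def, ← adjoint_inner_right] using
      (hweak ((K†) z)).comp (hns.comp hφ.tendsto_atTop)
  have ha : a = 0 := by
    simpa using tendsto_nhds_unique (hlim.inner (tendsto_const_nhds (x := a))) (hweakK a)
  exact ⟨φ, by simpa [ha, Function.comp_def] using hlim⟩

theorem IsCompletelyContinuous.adjoint [CompleteSpace E] {K : E →L[ℂ] E}
    (hK : IsCompletelyContinuous K) : IsCompletelyContinuous (K†) := by
  rintro x ⟨c, hx⟩ hweak
  set y := fun n => (K†) (x n)
  have hy : ∀ n, ‖y n‖ ≤ ‖K†‖ * c := fun n =>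
    (K†.le_opNorm _).trans (by gcongr; exact hx n)
  have hyweak : WeakTendsto y 0 := by
    rw [weakTendsto_zero_iff] at hweak ⊢
    simpa [y, adjoint_inner_left] using fun z => hweak (K z)
  have hKy := hK y ⟨_, hy⟩ hyweak
  have hsq : ∀ n, ‖y n‖ ^ 2 ≤ c * ‖K (y n)‖ := fun n => by
    have : ‖y n‖ ^ 2 = ‖⟪x n, K (y n)⟫_ℂ‖ := by
      rw [← adjoint_inner_left, inner_self_eq_norm_sq_to_K]; simp [y]
    rw [this]
    exact (norm_inner_le_norm _ _).trans (by gcongr; exact hx n)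
  have hsq0 : Tendsto (fun n => ‖y n‖ ^ 2) atTop (𝓝 0) :=
    squeeze_zero (fun n => by positivity) hsq (by simpa using hKy.norm.const_mul c)
  rw [tendsto_zero_iff_norm_tendsto_zero]
  simpa using hsq0.sqrt

theorem essNear_of_tendsto {dom : Submodule ℂ E} {T : E →ₗ[ℂ] E} {lam : ℂ} {b : ℕ → E}
    {M c : ℝ} (hM : 0 < M) (hdom : ∀ n, b n ∈ dom) (hweak : WeakTendsto b 0)
    (hnorm : Tendsto (fun n => ‖b n‖) atTop (𝓝 M))
    (hT : Tendsto (fun n => ‖T (b n) - lam • b n‖) atTop (𝓝 c)) :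
    EssNear dom T (c / M) lam := by
  obtain ⟨N, hN⟩ := eventually_atTop.mp (hnorm.eventually (eventually_gt_nhds hM))
  have hpos : ∀ k, 0 < ‖b (k + N)‖ := fun k => hN _ (Nat.le_add_left N k)
  have hinv : Tendsto (fun k => ‖b (k + N)‖⁻¹) atTop (𝓝 M⁻¹) :=
    ((tendsto_add_atTop_iff_nat N).mpr hnorm).inv₀ hM.ne'
  refine ⟨fun k => ‖b (k + N)‖⁻¹ • b (k + N), fun k => dom.smul_of_tower_mem _ (hdom _),
    fun k => norm_smul_inv_norm (norm_pos_iff.mp (hpos k)), ?_, ?_⟩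
  · rw [weakTendsto_zero_iff] at hweak ⊢
    intro y
    simpa [inner_smul_real_left] using
      (Complex.continuous_ofReal.tendsto _ |>.comp hinv).mul
        ((tendsto_add_atTop_iff_nat N).mpr (hweak y))
  · have := hinv.mul ((tendsto_add_atTop_iff_nat N).mpr hT)
    rw [inv_mul_eq_div] at this
    refine this.congr fun k => ?_
    dsimp only
    rw [T.map_smul_of_tower, smul_comm lam, ← smul_sub, norm_smul, norm_inv, norm_norm]

theorem essNear_of_resolvent_family [CompleteSpace E] {dom : Submodule ℂ E} {T : E →ₗ[ℂ] E}
    {lam δ : ℂ} {r₀ : ℝ} {A B C : E →L[ℂ] E} (hA : 0 < ‖A‖) (hr₀ : 0 < r₀)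
    (hfamily : ∀ μ : ℂ, ‖μ‖ < r₀ → ∃ B' : E →L[ℂ] E, ‖B'‖ ≤ ‖A‖ ∧ B' = A + μ • (A * B'))
    (hAinj : Function.Injective A) (hC : IsCompletelyContinuous C)
    (hBA : B = A + δ • (B * A) - B * C * A)
    (hB : ∀ y, B y ∈ dom ∧ T (B y) - lam • B y = y - C (B y)) :
    EssNear dom T ‖A‖⁻¹ lam := by
  obtain ⟨v, hv, hAv, hAAv⟩ := exists_seq_norm_apply_tendsto_opNorm hA hr₀ hfamily
  have hbdd : ∀ (D : E →L[ℂ] E) n, ‖D (v n)‖ ≤ ‖D‖ := fun D n =>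
    (D.le_opNorm _).trans (by rw [hv n, mul_one])
  have hcont : ∀ D : E →L[ℂ] E, Tendsto D (𝓝 0) (𝓝 0) := fun D => by
    simpa using D.continuous.tendsto 0
  have hAv_weak : WeakTendsto (fun n => A (v n)) 0 :=
    weakTendsto_zero_of_tendsto_apply hAinj (hbdd A) hAAv
  have hCAv := hC _ ⟨_, hbdd A⟩ hAv_weak
  have hBA_apply : ∀ x, B x = A x + δ • B (A x) - B (C (A x)) := fun x =>
    congrArg (fun D : E →L[ℂ] E => D x) hBA
  have hBAv : Tendsto (fun n => B (A (v n))) atTop (𝓝 0) := by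
    refine Tendsto.congr (fun n => (hBA_apply (A (v n))).symm) ?_
    simpa using (hAAv.add (((hcont B).comp hAAv).const_smul δ)).sub
      ((hcont B).comp ((hcont C).comp hAAv))
  have hBv_sub : Tendsto (fun n => B (v n) - A (v n)) atTop (𝓝 0) := by
    refine Tendsto.congr (fun n => ?_)
      (by simpa using (hBAv.const_smul δ).sub ((hcont B).comp hCAv))
    rw [hBA_apply (v n)]
    abel
  have hBv_weak : WeakTendsto (fun n => B (v n)) 0 := hAv_weak.of_tendsto_sub hBv_sub
  have hCBv := hC _ ⟨_, hbdd B⟩ hBv_weak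
  have hres : Tendsto (fun n => ‖T (B (v n)) - lam • B (v n)‖) atTop (𝓝 1) := by
    simp_rw [fun n => (hB (v n)).2]
    exact tendsto_norm_of_tendsto_sub (x := v) (by simp [hv]) (by simpa using hCBv.neg)
  simpa using essNear_of_tendsto hA (fun n => (hB (v n)).1) hBv_weak
    (tendsto_norm_of_tendsto_sub hAv hBv_sub) hres

namespace InResolvent

variable {dom : Submodule ℂ E} {T : E →ₗ[ℂ] E} {lam lam₁ : ℂ} {R R₁ K : E →L[ℂ] E}

theorem mem (hR : InResolvent ⊤ dom T lam R) (y : E) : R y ∈ dom :=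
  (hR.1 y trivial).1

theorem apply_sub (hR : InResolvent ⊤ dom T lam R) (y : E) : T (R y) - lam • R y = y :=
  (hR.1 y trivial).2

theorem injective (hR : InResolvent ⊤ dom T lam R) : Function.Injective R := fun a b hab => by
  rw [← hR.apply_sub a, ← hR.apply_sub b, hab]

theorem adjoint_injective [CompleteSpace E] (hd : dom.topologicalClosure = ⊤)
    (hR : InResolvent ⊤ dom T lam R) : Function.Injective (R†) := by
  refine LinearMap.ker_eq_bot.mp (le_bot_iff.mp ?_)
  calc (R†).ker = R.rangeᗮ := (orthogonal_range R).symm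
    _ ≤ domᗮ := Submodule.orthogonal_le fun x hx => ⟨_, hR.2.1 x hx⟩
    _ = ⊥ := Submodule.topologicalClosure_eq_top_iff.mp hd

theorem eq_add_smul_mul_sub_mul_right (hR₁ : InResolvent ⊤ dom T lam₁ R₁)
    (hR : InResolvent ⊤ dom (T + (K : E →ₗ[ℂ] E)) lam R) :
    R = R₁ + (lam - lam₁) • (R * R₁) - R * K * R₁ := by
  ext u
  have h := hR.2.1 (R₁ u) (hR₁.mem u)
  have h₁ := congrArg R (hR₁.apply_sub u)
  simp only [LinearMap.add_apply, coe_coe, map_sub, map_add, map_smul] at h h₁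
  simp only [sub_apply, add_apply, smul_apply, mul_apply_eq_comp]
  linear_combination (norm := module) h - h₁

theorem eq_add_smul_mul_sub_mul_left (hR₁ : InResolvent ⊤ dom T lam₁ R₁)
    (hR : InResolvent ⊤ dom (T + (K : E →ₗ[ℂ] E)) lam R) :
    R = R₁ + (lam - lam₁) • (R₁ * R) - R₁ * K * R := by
  ext u
  have h := hR₁.2.1 (R u) (hR.mem u)
  have h₁ := congrArg R₁ (hR.apply_sub u)
  simp only [LinearMap.add_apply, coe_coe, map_sub, map_add, map_smul] at h h₁
  simp only [sub_apply, add_apply, smul_apply, mul_apply_eq_comp]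
  linear_combination (norm := module) h₁ - h

theorem adjoint_mem_and_sub {domS : Submodule ℂ E} {S : E →ₗ[ℂ] E} [CompleteSpace E]
    (hadj : IsAdjointOp ⊤ dom T domS S) (hR : InResolvent ⊤ dom (T + (K : E →ₗ[ℂ] E)) lam R)
    (y : E) :
    (R†) y ∈ domS ∧ S ((R†) y) - (starRingEnd ℂ) lam • (R†) y = y - (K†) ((R†) y) := by
  have hinner : ∀ x ∈ dom,
      ⟪T x, (R†) y⟫_ℂ = ⟪x, y - (K†) ((R†) y) + (starRingEnd ℂ) lam • (R†) y⟫_ℂ := by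
    intro x hx
    have h := hR.2.1 x hx
    simp only [LinearMap.add_apply, coe_coe, map_sub, map_add, map_smul] at h
    rw [adjoint_inner_right, show R (T x) = x - R (K x) + lam • R x by
      linear_combination (norm := module) h]
    simp only [inner_add_left, inner_sub_left, inner_smul_left, inner_add_right, inner_sub_right,
      inner_smul_right, adjoint_inner_right]
  obtain ⟨hmem, hS⟩ := (hadj.2 _ trivial _ trivial).mpr hinner
  exact ⟨hmem, by rw [hS]; abel⟩

end InResolvent

section CompactPerturbation

variable [CompleteSpace E] {dom : Submodule ℂ E} {T : E →ₗ[ℂ] E} {lam lam₀ : ℂ} {r₀ : ℝ}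
  {R₀ R K : E →L[ℂ] E}

theorem essNear_of_compact_perturbation (hR₀ : InResolvent ⊤ dom T lam₀ R₀) (hR₀pos : 0 < ‖R₀‖)
    (hr₀ : 0 < r₀)
    (hnear : ∀ μ : ℂ, ‖μ‖ < r₀ → ∃ R', InResolvent ⊤ dom T (lam₀ + μ) R' ∧ ‖R'‖ ≤ ‖R₀‖)
    (hK : IsCompactOperator K) (hR : InResolvent ⊤ dom (T + (K : E →ₗ[ℂ] E)) lam R) :
    EssNear dom T ‖R₀‖⁻¹ lam := by
  refine essNear_of_resolvent_family hR₀pos hr₀ (fun μ hμ => ?_) hR₀.injective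
    hK.isCompletelyContinuous (hR₀.eq_add_smul_mul_sub_mul_right hR) fun y => ⟨hR.mem y, ?_⟩
  · obtain ⟨R', hR', hnorm⟩ := hnear μ hμ
    refine ⟨R', hnorm, ?_⟩
    have h := hR₀.eq_add_smul_mul_sub_mul_left (K := 0) (by simpa using hR')
    rwa [add_sub_cancel_left, mul_zero, zero_mul, sub_zero] at h
  · have h := hR.apply_sub y
    rw [LinearMap.add_apply, coe_coe] at h
    linear_combination (norm := module) h

theorem essNear_adjoint_of_compact_perturbation {domS : Submodule ℂ E} {S : E →ₗ[ℂ] E}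
    (hd : dom.topologicalClosure = ⊤) (hadj : IsAdjointOp ⊤ dom T domS S)
    (hR₀ : InResolvent ⊤ dom T lam₀ R₀) (hR₀pos : 0 < ‖R₀‖) (hr₀ : 0 < r₀)
    (hnear : ∀ μ : ℂ, ‖μ‖ < r₀ → ∃ R', InResolvent ⊤ dom T (lam₀ + μ) R' ∧ ‖R'‖ ≤ ‖R₀‖)
    (hK : IsCompactOperator K) (hR : InResolvent ⊤ dom (T + (K : E →ₗ[ℂ] E)) lam R) :
    EssNear domS S ‖R₀‖⁻¹ ((starRingEnd ℂ) lam) := by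
  rw [← adjoint.norm_map] at hR₀pos ⊢
  refine essNear_of_resolvent_family (δ := (starRingEnd ℂ) (lam - lam₀)) hR₀pos hr₀ (fun μ hμ => ?_)
    (hR₀.adjoint_injective hd)
    hK.isCompletelyContinuous.adjoint ?_ (hR.adjoint_mem_and_sub hadj)
  · obtain ⟨R', hR', hnorm⟩ := hnear ((starRingEnd ℂ) μ) (by rwa [Complex.norm_conj])
    refine ⟨R'†, by rwa [adjoint.norm_map, adjoint.norm_map], ?_⟩
    have h := hR₀.eq_add_smul_mul_sub_mul_right (K := 0) (by simpa using hR')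
    rw [add_sub_cancel_left, mul_zero, zero_mul, sub_zero] at h
    simpa [← star_eq_adjoint, star_mul] using congrArg star h
  · simpa [← star_eq_adjoint, star_mul, mul_assoc] using
      congrArg star (hR₀.eq_add_smul_mul_sub_mul_left hR)

end CompactPerturbation
end

theorem stmt19_general
    (dom : Submodule ℂ H₀) (T : H₀ →ₗ[ℂ] H₀)
    (hd : dom.topologicalClosure = ⊤)
    (domS : Submodule ℂ H₀) (S : H₀ →ₗ[ℂ] H₀)
    (hadj : IsAdjointOp ⊤ dom T domS S)
    (eps : ℝ) (heps : 0 < eps)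
    (U : Set ℂ) (hUopen : IsOpen U) (hUne : U.Nonempty)
    (hconst : ∀ lam ∈ U, ∃ R : H₀ →L[ℂ] H₀, InResolvent ⊤ dom T lam R ∧ ‖R‖ = 1 / eps) :
    (∀ lam : ℂ, InResolventSet ⊤ dom T lam →
        EssNear dom T eps lam ∧ EssNear domS S eps ((starRingEnd ℂ) lam)) ∧
      ∀ lam : ℂ, (∃ K : H₀ →L[ℂ] H₀, IsCompactOperator (⇑K) ∧
          InResolventSet ⊤ dom (T + (K : H₀ →ₗ[ℂ] H₀)) lam) →
        EssNear dom T eps lam ∧ EssNear domS S eps ((starRingEnd ℂ) lam) := by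
  obtain ⟨lam₀, hlam₀⟩ := hUne
  obtain ⟨r₀, hr₀, hball⟩ := Metric.isOpen_iff.mp hUopen lam₀ hlam₀
  obtain ⟨R₀, hR₀, hR₀norm⟩ := hconst lam₀ hlam₀
  have hR₀pos : 0 < ‖R₀‖ := hR₀norm ▸ by positivity
  have hnear : ∀ μ : ℂ, ‖μ‖ < r₀ →
      ∃ R, InResolvent ⊤ dom T (lam₀ + μ) R ∧ ‖R‖ ≤ ‖R₀‖ := fun μ hμ => by
    obtain ⟨R, hR, hRnorm⟩ := hconst (lam₀ + μ) (hball (by simpa [Complex.dist_eq] using hμ))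
    exact ⟨R, hR, (hRnorm.trans hR₀norm.symm).le⟩
  have hcompact : ∀ lam (K R : H₀ →L[ℂ] H₀), IsCompactOperator K →
      InResolvent ⊤ dom (T + (K : H₀ →ₗ[ℂ] H₀)) lam R →
      EssNear dom T eps lam ∧ EssNear domS S eps ((starRingEnd ℂ) lam) := by
    intro lam K R hK hR
    rw [show eps = ‖R₀‖⁻¹ by rw [hR₀norm, one_div, inv_inv]]
    exact ⟨essNear_of_compact_perturbation hR₀ hR₀pos hr₀ hnear hK hR,
      essNear_adjoint_of_compact_perturbation hd hadj hR₀ hR₀pos hr₀ hnear hK hR⟩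
  exact ⟨fun lam ⟨R, hR⟩ => hcompact lam 0 R isCompactOperator_zero (by simpa using hR),
    fun lam ⟨K, hK, R, hR⟩ => hcompact lam K R hK hR⟩

theorem stmt19 [TopologicalSpace.SeparableSpace H₀]
    (dom : Submodule ℂ H₀) (T : H₀ →ₗ[ℂ] H₀)
    (hd : dom.topologicalClosure = ⊤) (hcl : IsClosedOp dom T)
    (domS : Submodule ℂ H₀) (S : H₀ →ₗ[ℂ] H₀)
    (hadj : IsAdjointOp ⊤ dom T domS S)
    (eps : ℝ) (heps : 0 < eps)
    (U : Set ℂ) (hUopen : IsOpen U) (hUne : U.Nonempty)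
    (hconst : ∀ lam ∈ U, ∃ R : H₀ →L[ℂ] H₀, InResolvent ⊤ dom T lam R ∧ ‖R‖ = 1 / eps) :
    (∀ lam : ℂ, InResolventSet ⊤ dom T lam →
        EssNear dom T eps lam ∧ EssNear domS S eps ((starRingEnd ℂ) lam)) ∧
      ∀ lam : ℂ, (∃ K : H₀ →L[ℂ] H₀, IsCompactOperator (⇑K) ∧
          InResolventSet ⊤ dom (T + (K : H₀ →ₗ[ℂ] H₀)) lam) →
        EssNear dom T eps lam ∧ EssNear domS S eps ((starRingEnd ℂ) lam) :=
  stmt19_general dom T hd domS S hadj eps heps U hUopen hUne hconst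

end
end
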